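/- arXiv:1502.05313 — 2 statements merged into one kernel-verified Lean document; each statement's English description precedes it below -/
import Mathlib

section
/- Let V be a finite nonempty type, let p* : ℝ → V → ℝ be a family of unnormalized probabilities such that p*(β, v) > 0 for all β ∈ [0,1] and v ∈ V, and such that for each v the map β ↦ log p*(β, v) is twice continuously differentiable on [0,1]. Let β : [0,1] → [0,1] be a twice continuously differentiable function. For each K ∈ ℕ set β_k = β(k/K) for k = 0, …, K. Then, as K → ∞, the scaled sum K · Σ_{k=0}^{K−1} Var_{μ_{β_k}}[ v ↦ log p*(β_{k+1}, v) − log p*(β_k, v) ] converges to the integral J(β) = ∫₀¹ β′(t)² · g(β(t)) dt, where β′ denotes the derivative of β. (This is the paper's Theorem 1: under perfect transitions the scaled variance of the log AIS weight converges to the functional J.) -/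
open Filter Topology

/-- Partition function `Z(β) = ∑ v, p*(β, v)` of a family of unnormalized
probabilities over a finite type. -/
noncomputable def Zf {V : Type*} [Fintype V] (pstar : ℝ → V → ℝ) (β : ℝ) : ℝ :=
  ∑ v, pstar β v

/-- Intermediate distribution `μ_β(v) = p*(β, v) / Z(β)`. -/
noncomputable def aisDist {V : Type*} [Fintype V] (pstar : ℝ → V → ℝ) (β : ℝ) (v : V) : ℝ :=
  pstar β v / Zf pstar β

/-- Variance of `f : V → ℝ` under a probability mass function `μ` on a finite type. -/
noncomputable def pmfVar {V : Type*} [Fintype V] (μ : V → ℝ) (f : V → ℝ) : ℝ :=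
  ∑ v, μ v * (f v - ∑ w, μ w * f w) ^ 2

/-- `g(β) = Var_{μ_β}[ v ↦ ∂/∂β log p*(β, v) ]`, with the derivative taken
within `[0,1]` since `p*` is only assumed smooth there. -/
noncomputable def gfun {V : Type*} [Fintype V] (pstar : ℝ → V → ℝ) (β : ℝ) : ℝ :=
  pmfVar (aisDist pstar β)
    (fun v => derivWithin (fun b => Real.log (pstar b v)) (Set.Icc 0 1) β)

/-!
By Hadamard's lemma, `f b - f a = (b - a) * ∫₀¹ f'(a + s (b - a)) ds` for `C¹` functions on `[0,1]`,
and the integral is jointly continuous in `(a, b)` and equals `f'(a)` on the diagonal. Applied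
to `log p*(·, v)` and to `β`, this writes `K` times the `k`-th variance as `K⁻¹ Θ(k/K, (k+1)/K)` for a
function `Θ` continuous on `[0,1]²` with `Θ(t, t) = β'(t)² g(β(t))`. Uniform continuity of `Θ`
then makes these diagonal Riemann sums converge to `∫₀¹ Θ(t, t) dt`.
-/

open Set MeasureTheory

noncomputable def derivIccExtend (f : ℝ → ℝ) : ℝ → ℝ :=
  IccExtend zero_le_one ((Icc 0 1).domRestrict (derivWithin f (Icc 0 1)))

noncomputable def avgDeriv (f : ℝ → ℝ) (a b : ℝ) : ℝ :=
  ∫ s in (0 : ℝ)..1, derivIccExtend f (a + s * (b - a))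

section avgDeriv

variable {f : ℝ → ℝ}

lemma derivIccExtend_of_mem {x : ℝ} (hx : x ∈ Icc (0 : ℝ) 1) :
    derivIccExtend f x = derivWithin f (Icc 0 1) x :=
  IccExtend_of_mem _ _ hx

lemma continuous_derivIccExtend (hf : ContDiffOn ℝ 1 f (Icc 0 1)) :
    Continuous (derivIccExtend f) :=
  (continuousOn_iff_continuous_domRestrict.1 <|
    hf.continuousOn_derivWithin (uniqueDiffOn_Icc zero_lt_one) le_rfl).Icc_extend'

lemma continuous_avgDeriv (hf : ContDiffOn ℝ 1 f (Icc 0 1)) :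
    Continuous fun p : ℝ × ℝ => avgDeriv f p.1 p.2 := by
  have hf' := continuous_derivIccExtend hf
  exact intervalIntegral.continuous_parametric_intervalIntegral_of_continuous' (by fun_prop) 0 1

lemma avgDeriv_self {a : ℝ} (ha : a ∈ Icc (0 : ℝ) 1) :
    avgDeriv f a a = derivWithin f (Icc 0 1) a := by
  simp [avgDeriv, derivIccExtend_of_mem ha]

lemma add_mul_sub_mem_Ioo {a b s : ℝ} (ha : a ∈ Icc (0 : ℝ) 1) (hb : b ∈ Icc (0 : ℝ) 1)
    (hab : a ≠ b) (hs : s ∈ Ioo (0 : ℝ) 1) : a + s * (b - a) ∈ Ioo (0 : ℝ) 1 := by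
  obtain ⟨ha₀, ha₁⟩ := ha
  obtain ⟨hb₀, hb₁⟩ := hb
  obtain ⟨hs₀, hs₁⟩ := hs
  constructor <;> rcases hab.lt_or_gt with h | h <;> nlinarith

lemma sub_eq_mul_avgDeriv (hf : ContDiffOn ℝ 1 f (Icc 0 1)) {a b : ℝ}
    (ha : a ∈ Icc (0 : ℝ) 1) (hb : b ∈ Icc (0 : ℝ) 1) :
    f b - f a = (b - a) * avgDeriv f a b := by
  rcases eq_or_ne a b with rfl | hab
  · simp
  have hseg : MapsTo (fun s : ℝ => a + s * (b - a)) (Icc 0 1) (Icc 0 1) := by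
    intro s ⟨hs₀, hs₁⟩
    constructor <;> nlinarith [ha.1, ha.2, hb.1, hb.2]
  have hderiv : ∀ s ∈ Ioo (0 : ℝ) 1, HasDerivAt (fun s => f (a + s * (b - a)))
      ((b - a) * derivIccExtend f (a + s * (b - a))) s := by
    intro s hs
    have hx := add_mul_sub_mem_Ioo ha hb hab hs
    have hfx : HasDerivAt f (derivWithin f (Icc 0 1) (a + s * (b - a))) (a + s * (b - a)) :=
      ((hf.differentiableOn one_ne_zero _ (Ioo_subset_Icc_self hx)).hasDerivWithinAt).hasDerivAt
        (Icc_mem_nhds hx.1 hx.2)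
    rw [derivIccExtend_of_mem (Ioo_subset_Icc_self hx), mul_comm]
    exact hfx.comp s (((hasDerivAt_id s).mul_const (b - a)).const_add a |>.congr_deriv (one_mul _))
  have hcont := continuous_derivIccExtend hf
  have hftc := intervalIntegral.integral_eq_sub_of_hasDerivAt_of_le zero_le_one
    (hf.continuousOn.comp (by fun_prop) hseg) hderiv
    (Continuous.intervalIntegrable (by fun_prop) 0 1)
  rw [intervalIntegral.integral_const_mul] at hftc
  simpa [avgDeriv] using hftc.symm

end avgDeriv

lemma natCast_div_mem_Icc {k K : ℕ} (hk : k ≤ K) : (k : ℝ) / K ∈ Icc (0 : ℝ) 1 :=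
  ⟨by positivity, div_le_one_of_le₀ (by exact_mod_cast hk) (by positivity)⟩

lemma natCast_add_one_div_mem_Icc {k K : ℕ} (hk : k < K) : ((k : ℝ) + 1) / K ∈ Icc (0 : ℝ) 1 := by
  exact_mod_cast natCast_div_mem_Icc (Nat.succ_le_of_lt hk)

lemma sum_integral_range_div {h : ℝ → ℝ} (hh : ContinuousOn h (Icc 0 1)) {K : ℕ} (hK : K ≠ 0) :
    ∑ k ∈ Finset.range K, ∫ t in (k : ℝ) / K..((k : ℝ) + 1) / K, h t = ∫ t in (0 : ℝ)..1, h t := by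
  have hint : IntervalIntegrable h volume 0 1 := hh.intervalIntegrable_of_Icc zero_le_one
  have hsum := intervalIntegral.sum_integral_adjacent_intervals (a := fun k : ℕ => (k : ℝ) / K)
    fun k hk => hint.mono_set <| by
      rw [uIcc_of_le zero_le_one]
      exact uIcc_subset_Icc (natCast_div_mem_Icc hk.le) (natCast_div_mem_Icc hk)
  simpa [hK] using hsum

lemma abs_mul_sub_integral_le {h : ℝ → ℝ} {a b c ε : ℝ} (hab : a ≤ b)
    (hh : IntervalIntegrable h volume a b) (hc : ∀ t ∈ Ioc a b, |c - h t| ≤ ε) :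
    |(b - a) * c - ∫ t in a..b, h t| ≤ ε * (b - a) := by
  have hconst : (b - a) * c = ∫ _ in a..b, c := by simp
  rw [hconst, ← intervalIntegral.integral_sub intervalIntegrable_const hh,
    ← abs_of_nonneg (sub_nonneg.2 hab)]
  exact intervalIntegral.norm_integral_le_of_norm_le_const (f := fun t => c - h t) fun t ht =>
    hc t (by rwa [uIoc_of_le hab] at ht)

lemma abs_inv_mul_sub_integral_diag_le {Θ : ℝ × ℝ → ℝ}
    (hdiag : ContinuousOn (fun t => Θ (t, t)) (Icc 0 1)) {δ ε : ℝ}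
    (hΘδ : ∀ x ∈ Icc (0 : ℝ) 1 ×ˢ Icc (0 : ℝ) 1, ∀ y ∈ Icc (0 : ℝ) 1 ×ˢ Icc (0 : ℝ) 1,
      dist x y < δ → dist (Θ x) (Θ y) < ε)
    {k K : ℕ} (hk : k < K) (hKδ : (K : ℝ)⁻¹ < δ) :
    |(K : ℝ)⁻¹ * Θ ((k : ℝ) / K, ((k : ℝ) + 1) / K)
      - ∫ t in (k : ℝ) / K..((k : ℝ) + 1) / K, Θ (t, t)| ≤ ε * (K : ℝ)⁻¹ := by
  have hK : (0 : ℝ) < K := by exact_mod_cast (Nat.zero_le k).trans_lt hk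
  have hlen : ((k : ℝ) + 1) / K - k / K = (K : ℝ)⁻¹ := by field_simp; ring
  have hleft := natCast_div_mem_Icc hk.le
  have hright := natCast_add_one_div_mem_Icc hk
  rw [← hlen]
  refine abs_mul_sub_integral_le (by linarith [inv_pos.2 hK])
    ((hdiag.mono (uIcc_subset_Icc hleft hright)).intervalIntegrable) fun t ht => ?_
  have ht' : t ∈ Icc (0 : ℝ) 1 := ⟨hleft.1.trans ht.1.le, ht.2.trans hright.2⟩
  refine (hΘδ _ ⟨hleft, hright⟩ _ ⟨ht', ht'⟩ ?_).le
  rw [Prod.dist_eq, Real.dist_eq, Real.dist_eq, max_lt_iff, abs_sub_lt_iff, abs_sub_lt_iff]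
  refine ⟨⟨?_, ?_⟩, ?_, ?_⟩ <;> linarith [ht.1, ht.2]

theorem tendsto_sum_riemann_diag {Θ : ℝ × ℝ → ℝ} (hΘ : ContinuousOn Θ (Icc 0 1 ×ˢ Icc 0 1)) :
    Tendsto (fun K : ℕ => ∑ k ∈ Finset.range K, (K : ℝ)⁻¹ * Θ ((k : ℝ) / K, ((k : ℝ) + 1) / K))
      atTop (𝓝 (∫ t in (0 : ℝ)..1, Θ (t, t))) := by
  have hdiag : ContinuousOn (fun t => Θ (t, t)) (Icc 0 1) :=
    hΘ.comp (by fun_prop) fun t ht => ⟨ht, ht⟩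
  rw [Metric.tendsto_atTop]
  intro ε hε
  obtain ⟨δ, hδ, hΘδ⟩ := Metric.uniformContinuousOn_iff.1
    ((isCompact_Icc.prod isCompact_Icc).uniformContinuousOn_of_continuous hΘ) (ε / 2) (half_pos hε)
  obtain ⟨N, hN⟩ := exists_nat_one_div_lt hδ
  refine ⟨N + 1, fun K hNK => ?_⟩
  have hK : (0 : ℝ) < K := by exact_mod_cast N.succ_pos.trans_le hNK
  have hKδ : (K : ℝ)⁻¹ < δ := by
    refine lt_of_le_of_lt ?_ hN
    rw [one_div]
    gcongr
    exact_mod_cast hNK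
  rw [Real.dist_eq, ← sum_integral_range_div hdiag (Nat.cast_ne_zero.1 hK.ne'),
    ← Finset.sum_sub_distrib]
  calc _ ≤ ∑ k ∈ Finset.range K, |(K : ℝ)⁻¹ * Θ ((k : ℝ) / K, ((k : ℝ) + 1) / K)
      - ∫ t in (k : ℝ) / K..((k : ℝ) + 1) / K, Θ (t, t)| := Finset.abs_sum_le_sum_abs _ _
    _ ≤ ∑ _k ∈ Finset.range K, ε / 2 * (K : ℝ)⁻¹ := Finset.sum_le_sum fun k hk =>
        abs_inv_mul_sub_integral_diag_le hdiag hΘδ (Finset.mem_range.1 hk) hKδ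
    _ = ε / 2 := by rw [Finset.sum_const, Finset.card_range, nsmul_eq_mul]; field_simp
    _ < ε := half_lt_self hε

section Variance

variable {V : Type*} [Fintype V]

lemma pmfVar_const_mul (μ f : V → ℝ) (c : ℝ) :
    pmfVar μ (fun v => c * f v) = c ^ 2 * pmfVar μ f := by
  simp only [pmfVar, Finset.mul_sum]
  refine Finset.sum_congr rfl fun v _ => ?_
  simp only [mul_left_comm _ c, ← Finset.mul_sum]
  ring

lemma ContinuousOn.pmfVar {X : Type*} [TopologicalSpace X] {s : Set X} {μ f : X → V → ℝ}
    (hμ : ContinuousOn μ s) (hf : ContinuousOn f s) :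
    ContinuousOn (fun x => _root_.pmfVar (μ x) (f x)) s := by
  have hμ' := continuousOn_pi.1 hμ
  have hf' := continuousOn_pi.1 hf
  unfold _root_.pmfVar
  fun_prop

lemma continuousOn_aisDist [Nonempty V] {pstar : ℝ → V → ℝ} {s : Set ℝ}
    (hpos : ∀ b ∈ s, ∀ v, 0 < pstar b v) (hcont : ∀ v, ContinuousOn (fun b => pstar b v) s) :
    ContinuousOn (aisDist pstar) s :=
  continuousOn_pi.2 fun v => (hcont v).div (continuousOn_finsetSum _ fun w _ => hcont w)
    fun b hb => (Finset.sum_pos (fun w _ => hpos b hb w) Finset.univ_nonempty).ne'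

end Variance

noncomputable def normalizedStepVariance {V : Type*} [Fintype V] (pstar : ℝ → V → ℝ)
    (β : ℝ → ℝ) (x y : ℝ) : ℝ :=
  avgDeriv β x y ^ 2 *
    pmfVar (aisDist pstar (β x)) (fun v => avgDeriv (fun b => Real.log (pstar b v)) (β x) (β y))

section NormalizedStepVariance

variable {V : Type*} [Fintype V] {pstar : ℝ → V → ℝ} {β : ℝ → ℝ}

lemma pmfVar_log_sub_eq
    (hsmooth : ∀ v, ContDiffOn ℝ 1 (fun b => Real.log (pstar b v)) (Icc 0 1))
    {a b : ℝ} (ha : a ∈ Icc (0 : ℝ) 1) (hb : b ∈ Icc (0 : ℝ) 1) :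
    pmfVar (aisDist pstar a) (fun v => Real.log (pstar b v) - Real.log (pstar a v)) =
      (b - a) ^ 2 * pmfVar (aisDist pstar a)
        (fun v => avgDeriv (fun b => Real.log (pstar b v)) a b) := by
  simp_rw [sub_eq_mul_avgDeriv (hsmooth _) ha hb]
  exact pmfVar_const_mul _ _ _

lemma pmfVar_log_sub_comp_eq
    (hsmooth : ∀ v, ContDiffOn ℝ 1 (fun b => Real.log (pstar b v)) (Icc 0 1))
    (hβmap : MapsTo β (Icc 0 1) (Icc 0 1)) (hβ : ContDiffOn ℝ 1 β (Icc 0 1))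
    {x y : ℝ} (hx : x ∈ Icc (0 : ℝ) 1) (hy : y ∈ Icc (0 : ℝ) 1) :
    pmfVar (aisDist pstar (β x)) (fun v => Real.log (pstar (β y) v) - Real.log (pstar (β x) v)) =
      (y - x) ^ 2 * normalizedStepVariance pstar β x y := by
  rw [pmfVar_log_sub_eq hsmooth (hβmap hx) (hβmap hy), sub_eq_mul_avgDeriv hβ hx hy,
    normalizedStepVariance]
  ring

lemma normalizedStepVariance_self (hβmap : MapsTo β (Icc 0 1) (Icc 0 1))
    {x : ℝ} (hx : x ∈ Icc (0 : ℝ) 1) :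
    normalizedStepVariance pstar β x x = derivWithin β (Icc 0 1) x ^ 2 * gfun pstar (β x) := by
  simp only [normalizedStepVariance, avgDeriv_self hx, avgDeriv_self (hβmap hx), gfun]

lemma continuousOn_normalizedStepVariance [Nonempty V]
    (hpos : ∀ b ∈ Icc (0 : ℝ) 1, ∀ v, 0 < pstar b v)
    (hsmooth : ∀ v, ContDiffOn ℝ 1 (fun b => Real.log (pstar b v)) (Icc 0 1))
    (hβmap : MapsTo β (Icc 0 1) (Icc 0 1)) (hβ : ContDiffOn ℝ 1 β (Icc 0 1)) :
    ContinuousOn (fun p : ℝ × ℝ => normalizedStepVariance pstar β p.1 p.2)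
      (Icc 0 1 ×ˢ Icc 0 1) := by
  have hpstar : ∀ v, ContinuousOn (fun b => pstar b v) (Icc 0 1) := fun v =>
    (hsmooth v).continuousOn.rexp.congr fun b hb => (Real.exp_log (hpos b hb v)).symm
  have hββ : ContinuousOn (fun p : ℝ × ℝ => (β p.1, β p.2)) (Icc 0 1 ×ˢ Icc 0 1) :=
    hβ.continuousOn.prodMap hβ.continuousOn
  refine ((continuous_avgDeriv hβ).continuousOn.pow 2).mul (ContinuousOn.pmfVar ?_ ?_)
  · exact (continuousOn_aisDist hpos hpstar).comp (hβ.continuousOn.comp continuousOn_fst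
      fun p hp => hp.1) fun p hp => hβmap hp.1
  · exact continuousOn_pi.2 fun v => ((continuous_avgDeriv (hsmooth v)).comp_continuousOn hββ :)

end NormalizedStepVariance

/-- **Theorem 1 of the paper.** Under perfect transitions, for a smooth annealing
schedule `β_k = β(k/K)` the scaled variance of the log AIS weight,
`K · Σ_{k<K} Var_{μ_{β_k}}[log p*(β_{k+1}, ·) − log p*(β_k, ·)]`, converges as
`K → ∞` to the functional `J(β) = ∫₀¹ β′(t)² g(β(t)) dt`. -/
theorem ais_scaled_variance_tendsto_functional
    {V : Type*} [Fintype V] [Nonempty V] (pstar : ℝ → V → ℝ)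
    (hpos : ∀ b ∈ Set.Icc (0 : ℝ) 1, ∀ v : V, 0 < pstar b v)
    (hsmooth : ∀ v : V,
      ContDiffOn ℝ 2 (fun b => Real.log (pstar b v)) (Set.Icc 0 1))
    (β : ℝ → ℝ)
    (hβmap : ∀ t ∈ Set.Icc (0 : ℝ) 1, β t ∈ Set.Icc (0 : ℝ) 1)
    (hβ : ContDiffOn ℝ 2 β (Set.Icc 0 1)) :
    Tendsto
      (fun K : ℕ => (K : ℝ) * ∑ k ∈ Finset.range K,
        pmfVar (aisDist pstar (β ((k : ℝ) / K)))
          (fun v => Real.log (pstar (β (((k : ℝ) + 1) / K)) v)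
            - Real.log (pstar (β ((k : ℝ) / K)) v)))
      atTop
      (𝓝 (∫ t in (0 : ℝ)..1, (deriv β t) ^ 2 * gfun pstar (β t))) := by
  have hsmooth₁ v := (hsmooth v).of_le one_le_two
  have hβ₁ := hβ.of_le one_le_two
  have hJ : ∫ t in (0 : ℝ)..1, (deriv β t) ^ 2 * gfun pstar (β t) =
      ∫ t in (0 : ℝ)..1, normalizedStepVariance pstar β t t :=
    intervalIntegral.integral_congr_Ioo_of_le zero_le_one fun t ht => by
      rw [normalizedStepVariance_self hβmap (Ioo_subset_Icc_self ht),
        derivWithin_of_mem_nhds (Icc_mem_nhds ht.1 ht.2)]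
  rw [hJ]
  refine (tendsto_sum_riemann_diag
    (continuousOn_normalizedStepVariance hpos hsmooth₁ hβmap hβ₁)).congr' ?_
  filter_upwards [eventually_ne_atTop 0] with K hK
  rw [Finset.mul_sum]
  refine Finset.sum_congr rfl fun k hk => ?_
  have hk := Finset.mem_range.1 hk
  rw [pmfVar_log_sub_comp_eq hsmooth₁ hβmap hβ₁ (natCast_div_mem_Icc hk.le)
    (natCast_add_one_div_mem_Icc hk)]
  field_simp
  ring
end

section
/- Let V be a finite nonempty type, let p* : ℝ → V → ℝ satisfy p*(β, v) > 0 for all β ∈ [0,1] and v ∈ V, and let 0 = β_0 < β_1 < … < β_K = 1 be a schedule. Let v_0, v_1, …, v_{K−1} be independent V-valued random variables with v_k distributed according to μ_{β_k}. Then the expectation of the AIS importance weight w = Π_{k=0}^{K−1} p*(β_{k+1}, v_k) / p*(β_k, v_k) equals Z(1)/Z(0). In particular, Z(0) · E[w] is an unbiased estimate of the partition function Z(1). (This is the unbiasedness property of AIS under perfect transitions, which the paper relies on throughout.) -/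
open MeasureTheory ProbabilityTheory

theorem monotoneOn_Iic_of_forall_le_succ {α : Type*} [Preorder α] {f : ℕ → α} {n : ℕ}
    (hf : ∀ k < n, f k ≤ f (k + 1)) : MonotoneOn f (Set.Iic n) := by
  intro i _ j (hjn : j ≤ n) hij
  induction j, hij using Nat.le_induction with
  | base => exact le_rfl
  | succ j _ ih => exact (ih (by omega)).trans (hf j (by omega))

theorem prod_range_div_eq_div_of_ne_zero {G₀ : Type*} [CommGroupWithZero G₀] {f : ℕ → G₀}
    {n : ℕ} (hf : ∀ k ≤ n, f k ≠ 0) : ∏ i ∈ Finset.range n, f (i + 1) / f i = f n / f 0 := by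
  induction n with
  | zero => simp [hf 0 le_rfl]
  | succ n ih =>
    rw [Finset.prod_range_succ, ih fun k hk ↦ hf k (hk.trans n.le_succ),
      div_mul_div_cancel₀' (hf n n.le_succ)]

theorem Zf_pos {V : Type*} [Fintype V] [Nonempty V] {pstar : ℝ → V → ℝ} {b : ℝ}
    (hpos : ∀ v, 0 < pstar b v) : 0 < Zf pstar b :=
  Finset.sum_pos (fun v _ ↦ hpos v) Finset.univ_nonempty

section

variable {Ω V : Type*} [MeasurableSpace Ω] [Fintype V] [MeasurableSpace V]
  [MeasurableSingletonClass V] {P : Measure Ω} {X : Ω → V}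

theorem integral_comp_eq_sum_of_measure_eq_ofReal [IsFiniteMeasure P] (hX : Measurable X)
    {q : V → ℝ} (hq : ∀ v, 0 ≤ q v) (hlaw : ∀ v, P {ω | X ω = v} = ENNReal.ofReal (q v))
    (f : V → ℝ) : ∫ ω, f (X ω) ∂P = ∑ v, q v * f v := by
  rw [← integral_map hX.aemeasurable (measurable_of_finite f).aestronglyMeasurable,
    integral_fintype .of_finite]
  refine Finset.sum_congr rfl fun v _ ↦ ?_
  rw [measureReal_def, Measure.map_apply hX (measurableSet_singleton v),
    ← Set.ofPred_eq_eq_singleton, Set.preimage_ofPred_eq, hlaw v, ENNReal.toReal_ofReal (hq v),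
    smul_eq_mul]

theorem integral_ratio_of_law_aisDist [IsFiniteMeasure P] (hX : Measurable X)
    {pstar : ℝ → V → ℝ} {b : ℝ} (hpos : ∀ v, 0 < pstar b v)
    (hlaw : ∀ v, P {ω | X ω = v} = ENNReal.ofReal (aisDist pstar b v)) (b' : ℝ) :
    ∫ ω, pstar b' (X ω) / pstar b (X ω) ∂P = Zf pstar b' / Zf pstar b := by
  have hZ : 0 ≤ Zf pstar b := Finset.sum_nonneg fun v _ ↦ (hpos v).le
  rw [integral_comp_eq_sum_of_measure_eq_ofReal hX (fun v ↦ div_nonneg (hpos v).le hZ) hlaw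
    (fun v ↦ pstar b' v / pstar b v), Zf, Zf, Finset.sum_div]
  exact Finset.sum_congr rfl fun v _ ↦ div_mul_div_cancel₀' (hpos v).ne' _ _

end

theorem ais_weight_unbiased_general
    {V : Type*} [Fintype V] [Nonempty V]
    [MeasurableSpace V] [MeasurableSingletonClass V]
    (pstar : ℝ → V → ℝ)
    (hpos : ∀ b ∈ Set.Icc (0 : ℝ) 1, ∀ v : V, 0 < pstar b v)
    (K : ℕ)
    (β : ℕ → ℝ) (hβ0 : β 0 = 0) (hβK : β K = 1)
    (hmono : ∀ k < K, β k < β (k + 1))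
    {Ω : Type*} [MeasurableSpace Ω] (P : Measure Ω) [IsProbabilityMeasure P]
    (X : Fin K → Ω → V)
    (hmeas : ∀ k : Fin K, Measurable (X k))
    (hindep : iIndepFun X P)
    (hdist : ∀ k : Fin K, ∀ v0 : V,
      P {ω | X k ω = v0} = ENNReal.ofReal (aisDist pstar (β k) v0)) :
    (∫ ω, (∏ k : Fin K,
        pstar (β ((k : ℕ) + 1)) (X k ω) / pstar (β (k : ℕ)) (X k ω)) ∂P)
      = Zf pstar 1 / Zf pstar 0
    ∧ Zf pstar 0 * (∫ ω, (∏ k : Fin K,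
        pstar (β ((k : ℕ) + 1)) (X k ω) / pstar (β (k : ℕ)) (X k ω)) ∂P)
      = Zf pstar 1 := by
  have hβ_mem : ∀ k ≤ K, β k ∈ Set.Icc 0 1 := fun k hk ↦ by
    have hβ_mono := monotoneOn_Iic_of_forall_le_succ fun k hk ↦ (hmono k hk).le
    rw [← hβ0, ← hβK]
    exact ⟨hβ_mono (Nat.zero_le K) hk (Nat.zero_le k), hβ_mono hk (Set.mem_Iic.2 le_rfl) hk⟩
  have hZ : ∀ k ≤ K, Zf pstar (β k) ≠ 0 := fun k hk ↦ (Zf_pos (hpos _ (hβ_mem k hk))).ne'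
  have hmean : (∫ ω, (∏ k : Fin K,
      pstar (β ((k : ℕ) + 1)) (X k ω) / pstar (β (k : ℕ)) (X k ω)) ∂P)
        = Zf pstar 1 / Zf pstar 0 :=
    calc _ = ∏ k : Fin K, ∫ ω, pstar (β (k + 1)) (X k ω) / pstar (β k) (X k ω) ∂P :=
          hindep.integral_fun_prod_comp
            (f := fun (k : Fin K) v ↦ pstar (β (k + 1)) v / pstar (β k) v)
            (fun k ↦ (hmeas k).aemeasurable) fun k ↦ (measurable_of_finite _).aestronglyMeasurable
      _ = ∏ k : Fin K, Zf pstar (β ((k : ℕ) + 1)) / Zf pstar (β k) :=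
          Finset.prod_congr rfl fun k _ ↦ integral_ratio_of_law_aisDist (hmeas k)
            (hpos _ (hβ_mem k k.is_lt.le)) (hdist k) _
      _ = ∏ k ∈ Finset.range K, Zf pstar (β (k + 1)) / Zf pstar (β k) :=
          Fin.prod_univ_eq_prod_range (fun k ↦ Zf pstar (β (k + 1)) / Zf pstar (β k)) K
      _ = Zf pstar 1 / Zf pstar 0 := by
          rw [prod_range_div_eq_div_of_ne_zero (f := fun k ↦ Zf pstar (β k)) hZ, hβ0, hβK]
  refine ⟨hmean, ?_⟩
  rw [hmean, mul_div_cancel₀ _ (hβ0 ▸ hZ 0 (Nat.zero_le K))]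

/-- **Unbiasedness of AIS under perfect transitions.** With independent
intermediate samples `v_k ∼ μ_{β_k}`, the AIS importance weight
`w = Π_{k<K} p*(β_{k+1}, v_k) / p*(β_k, v_k)` satisfies `E[w] = Z(1)/Z(0)`;
in particular `Z(0) · E[w]` is an unbiased estimate of `Z(1)`. -/
theorem ais_weight_unbiased
    {V : Type*} [Fintype V] [Nonempty V]
    [MeasurableSpace V] [MeasurableSingletonClass V]
    (pstar : ℝ → V → ℝ)
    (hpos : ∀ b ∈ Set.Icc (0 : ℝ) 1, ∀ v : V, 0 < pstar b v)
    (K : ℕ) (hK : 0 < K)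
    (β : ℕ → ℝ) (hβ0 : β 0 = 0) (hβK : β K = 1)
    (hmono : ∀ k < K, β k < β (k + 1))
    {Ω : Type*} [MeasurableSpace Ω] (P : Measure Ω) [IsProbabilityMeasure P]
    (X : Fin K → Ω → V)
    (hmeas : ∀ k : Fin K, Measurable (X k))
    (hindep : iIndepFun X P)
    (hdist : ∀ k : Fin K, ∀ v0 : V,
      P {ω | X k ω = v0} = ENNReal.ofReal (aisDist pstar (β k) v0)) :
    (∫ ω, (∏ k : Fin K,
        pstar (β ((k : ℕ) + 1)) (X k ω) / pstar (β (k : ℕ)) (X k ω)) ∂P)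
      = Zf pstar 1 / Zf pstar 0
    ∧ Zf pstar 0 * (∫ ω, (∏ k : Fin K,
        pstar (β ((k : ℕ) + 1)) (X k ω) / pstar (β (k : ℕ)) (X k ω)) ∂P)
      = Zf pstar 1 :=
  ais_weight_unbiased_general pstar hpos K β hβ0 hβK hmono P X hmeas hindep hdist
end
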